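/- arXiv:1709.05557 — 3 statements merged into one kernel-verified Lean document; each statement's English description precedes it below -/
import Mathlib

section
/- Let τ range over a finite index set, and let h_τ > 0, s_τ > 0, s'_τ > 0 be real numbers. Set ỹ = ∑_τ h_τ · s'_τ. Then −log(∑_τ h_τ · s_τ) ≤ −∑_τ (h_τ · s'_τ / ỹ) · log(s_τ) − ∑_τ (h_τ · s'_τ / ỹ) · log(ỹ / s'_τ), with equality when s_τ = s'_τ for all τ. (Paper's inequality (21), obtained from Jensen's inequality applied to the convex function −log.) -/
/-!
With `Y = ∑ h τ * s' τ`, the numbers `w τ = h τ * s' τ / Y` are probability weights and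
`∑ w τ * (s τ * (Y / s' τ)) = ∑ h τ * s τ`. Jensen's inequality for the concave `log` at the points
`s τ * (Y / s' τ)`, whose logarithms split as `log (s τ) + log (Y / s' τ)`, is the inequality;
for `s = s'` all these points equal `Y`, so Jensen's inequality is an equality.
-/

open Finset Real

theorem Real.sum_mul_log_le_log_sum_mul {ι : Type*} {I : Finset ι} {w x : ι → ℝ}
    (hw : ∀ i ∈ I, 0 ≤ w i) (hw₁ : ∑ i ∈ I, w i = 1) (hx : ∀ i ∈ I, 0 < x i) :
    ∑ i ∈ I, w i * log (x i) ≤ log (∑ i ∈ I, w i * x i) := by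
  simpa using strictConcaveOn_log_Ioi.concaveOn.le_map_sum hw hw₁ hx

theorem Real.sum_mul_log_add_sum_mul_log {ι : Type*} {I : Finset ι} {w x y : ι → ℝ}
    (hx : ∀ i ∈ I, x i ≠ 0) (hy : ∀ i ∈ I, y i ≠ 0) :
    ∑ i ∈ I, w i * log (x i) + ∑ i ∈ I, w i * log (y i) = ∑ i ∈ I, w i * log (x i * y i) := by
  rw [← sum_add_distrib]
  exact sum_congr rfl fun i hi ↦ by rw [log_mul (hx i hi) (hy i hi), mul_add]

/-- Paper's inequality (21): for positive `h τ`, `s τ`, `s' τ` and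
`ỹ = ∑ τ, h τ * s' τ`, one has
`−log (∑ τ, h τ * s τ) ≤ −∑ τ (h τ s' τ / ỹ) log (s τ) − ∑ τ (h τ s' τ / ỹ) log (ỹ / s' τ)`,
with equality when `s = s'`.  (Obtained from Jensen's inequality applied to `−log`.) -/
theorem neg_log_sum_jensen_bound {ι : Type*} (I : Finset ι)
    (h s s' : ι → ℝ)
    (hh : ∀ τ ∈ I, 0 < h τ)
    (hs : ∀ τ ∈ I, 0 < s τ)
    (hs' : ∀ τ ∈ I, 0 < s' τ) :
    (-Real.log (∑ τ ∈ I, h τ * s τ) ≤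
      -(∑ τ ∈ I, (h τ * s' τ / (∑ τ' ∈ I, h τ' * s' τ')) * Real.log (s τ))
      - ∑ τ ∈ I, (h τ * s' τ / (∑ τ' ∈ I, h τ' * s' τ')) *
          Real.log ((∑ τ' ∈ I, h τ' * s' τ') / s' τ)) ∧
    ((∀ τ ∈ I, s τ = s' τ) →
      -Real.log (∑ τ ∈ I, h τ * s τ) =
        -(∑ τ ∈ I, (h τ * s' τ / (∑ τ' ∈ I, h τ' * s' τ')) * Real.log (s τ))
        - ∑ τ ∈ I, (h τ * s' τ / (∑ τ' ∈ I, h τ' * s' τ')) *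
            Real.log ((∑ τ' ∈ I, h τ' * s' τ') / s' τ)) := by
  rcases I.eq_empty_or_nonempty with rfl | hI
  · simp
  set Y := ∑ τ ∈ I, h τ * s' τ
  have hY : 0 < Y := sum_pos (fun τ hτ ↦ mul_pos (hh τ hτ) (hs' τ hτ)) hI
  have hw : ∀ τ ∈ I, 0 ≤ h τ * s' τ / Y := fun τ hτ ↦ by
    have := hh τ hτ; have := hs' τ hτ; positivity
  have hw₁ : ∑ τ ∈ I, h τ * s' τ / Y = 1 := by rw [← sum_div, div_self hY.ne']
  have hx : ∀ τ ∈ I, 0 < s τ * (Y / s' τ) := fun τ hτ ↦ by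
    have := hs τ hτ; have := hs' τ hτ; positivity
  have hrhs : -(∑ τ ∈ I, h τ * s' τ / Y * log (s τ)) - ∑ τ ∈ I, h τ * s' τ / Y * log (Y / s' τ)
      = -∑ τ ∈ I, h τ * s' τ / Y * log (s τ * (Y / s' τ)) := by
    rw [sub_eq_add_neg, ← neg_add, sum_mul_log_add_sum_mul_log (fun τ hτ ↦ (hs τ hτ).ne')
      fun τ hτ ↦ (div_pos hY (hs' τ hτ)).ne']
  have hmean : ∑ τ ∈ I, h τ * s' τ / Y * (s τ * (Y / s' τ)) = ∑ τ ∈ I, h τ * s τ :=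
    sum_congr rfl fun τ hτ ↦ by field_simp [(hs' τ hτ).ne', hY.ne']
  rw [hrhs]
  refine ⟨?_, fun hss' ↦ ?_⟩
  · have := sum_mul_log_le_log_sum_mul hw hw₁ hx
    rw [hmean] at this
    linarith
  · have hpoints : ∀ τ ∈ I, s τ * (Y / s' τ) = Y := fun τ hτ ↦ by
      rw [hss' τ hτ, mul_div_cancel₀ _ (hs' τ hτ).ne']
    have hjensen_eq : ∑ τ ∈ I, h τ * s' τ / Y * log (s τ * (Y / s' τ)) = log Y := by
      rw [sum_congr rfl fun τ hτ ↦ by rw [hpoints τ hτ], ← sum_mul, hw₁, one_mul]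
    rw [hjensen_eq, sum_congr rfl fun τ hτ ↦ by rw [hss' τ hτ]]
end

section
/- Fix 0 < ρ < 1, λ ≥ 0, finite index sets for k, t, τ, strictly positive data y(k,t), strictly positive fixed parameters h(k,τ), strictly positive s̃(k,t), and strictly positive current iterate s⁰(k,t) (with the zero-padding convention s(k,t) = 0 for t outside the time range, and all convolution sums ỹ(k,t) = ∑_τ h(k,τ)·s⁰(k,t−τ) assumed strictly positive). Define L₂(s) = ρ·∑_{k,t} ( s(k,t)·log(s(k,t)/s̃(k,t)) − s(k,t) ) + (1−ρ)·∑_{k,t} ( λ·s(k,t) + ∑_τ h(k,τ)·s(k,t−τ) ) − (1−ρ)·∑_{k,t} y(k,t)·log(∑_τ h(k,τ)·s(k,t−τ)), and define G(s,s⁰) = ρ·∑_{k,t} ( s(k,t)·log(s(k,t)/s̃(k,t)) − s(k,t) ) + (1−ρ)·∑_{k,t} ( λ·s(k,t) + ∑_τ h(k,τ)·s(k,t−τ) ) − (1−ρ)·∑_{k,t,τ} ( y(k,t)·h(k,τ)·s⁰(k,t−τ)/ỹ(k,t) )·log(s(k,t−τ)) − (1−ρ)·∑_{k,t,τ} ( y(k,t)·h(k,τ)·s⁰(k,t−τ)/ỹ(k,t)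 )·log(ỹ(k,t)/s⁰(k,t−τ)). Then G is an auxiliary function for L₂: G(s,s⁰) ≥ L₂(s) for all strictly positive s, and G(s,s) = L₂(s). -/
open Finset Real

/-! For fixed `k, t` the numbers `w τ = h(k,τ) s⁰(k,t-τ) / ỹ(k,t)` form a probability vector,
and the two logarithmic sums of `G` combine into `y(k,t) ∑ τ, w τ log (h(k,τ) s(k,t-τ) / w τ)`.
Jensen's inequality for the concave `log` bounds this by `y(k,t) log ∑ τ, h(k,τ) s(k,t-τ)`,
which is `G s s⁰ ≥ L₂ s`. When `s⁰ = s` the ratio `h(k,τ) s(k,t-τ) / w τ` is the constant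
`ỹ(k,t)`, so Jensen's inequality is an equality. -/

theorem sum_div_mul_log_mul_div_le_log_sum {ι : Type*} (S : Finset ι) {a b : ι → ℝ}
    (ha : ∀ i ∈ S, 0 ≤ a i) (hb : ∀ i ∈ S, 0 ≤ b i) (hab : ∀ i ∈ S, 0 < a i → 0 < b i)
    (hA : 0 < ∑ i ∈ S, a i) :
    ∑ i ∈ S, a i / (∑ j ∈ S, a j) * log (b i * (∑ j ∈ S, a j) / a i)
      ≤ log (∑ i ∈ S, b i) := by
  set A := ∑ j ∈ S, a j
  set P := S.filter (0 < a ·)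
  have hP : ∀ i ∈ P, 0 < a i := fun i hi => (mem_filter.1 hi).2
  have hAP : ∑ i ∈ P, a i = A :=
    sum_filter_of_ne fun i hi hai => (ha i hi).lt_of_ne' hai
  have hBP : 0 < ∑ i ∈ P, b i := by
    obtain ⟨i, hi⟩ : P.Nonempty := nonempty_of_sum_ne_zero (hAP ▸ hA.ne')
    exact sum_pos (fun j hj => hab j (filter_subset _ _ hj) (hP j hj)) ⟨i, hi⟩
  calc ∑ i ∈ S, a i / A * log (b i * A / a i)
      = ∑ i ∈ P, (a i / A) • log (b i * A / a i) :=
        (sum_filter_of_ne fun i hi hne => (ha i hi).lt_of_ne' fun h0 => hne (by simp [h0])).symm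
    _ ≤ log (∑ i ∈ P, (a i / A) • (b i * A / a i)) :=
        strictConcaveOn_log_Ioi.concaveOn.le_map_sum (fun i hi => (div_pos (hP i hi) hA).le)
          (by rw [← sum_div, hAP, div_self hA.ne'])
          (fun i hi => div_pos (mul_pos (hab i (filter_subset _ _ hi) (hP i hi)) hA) (hP i hi))
    _ = log (∑ i ∈ P, b i) := by
        congr 1
        refine sum_congr rfl fun i hi => ?_
        rw [smul_eq_mul]
        field_simp [(hP i hi).ne']
    _ ≤ log (∑ i ∈ S, b i) :=
        log_le_log hBP (sum_le_sum_of_subset_of_nonneg (filter_subset _ _) fun i hi _ => hb i hi)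

theorem sum_mul_log_add_mul_log_div_le_mul_log_sum {ι : Type*} (S : Finset ι) {y : ℝ}
    {c u v : ι → ℝ} (hy : 0 ≤ y) (hc : ∀ i ∈ S, 0 ≤ c i) (hu : ∀ i ∈ S, 0 ≤ u i)
    (hv : ∀ i ∈ S, 0 ≤ v i) (huv : ∀ i ∈ S, 0 < u i → 0 < v i)
    (hA : 0 < ∑ i ∈ S, c i * u i) :
    ∑ i ∈ S, (y * c i * u i / (∑ j ∈ S, c j * u j) * log (v i)
      + y * c i * u i / (∑ j ∈ S, c j * u j) * log ((∑ j ∈ S, c j * u j) / u i))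
      ≤ y * log (∑ i ∈ S, c i * v i) := by
  set A := ∑ j ∈ S, c j * u j
  have hterm : ∀ i ∈ S, y * c i * u i / A * log (v i) + y * c i * u i / A * log (A / u i)
      = y * (c i * u i / A * log (c i * v i * A / (c i * u i))) := by
    intro i hi
    simp only [mul_assoc y, mul_div_assoc y, ← mul_add]
    rcases (mul_nonneg (hc i hi) (hu i hi)).eq_or_lt with h0 | hcu
    · simp [← h0]
    · have hci : 0 < c i := pos_of_mul_pos_left hcu (hu i hi)
      have hui : 0 < u i := pos_of_mul_pos_right hcu (hc i hi)
      have hvi := huv i hi hui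
      rw [← log_mul hvi.ne' (div_pos hA hui).ne']
      congr 3
      field_simp
  calc _ = y * ∑ i ∈ S, c i * u i / A * log (c i * v i * A / (c i * u i)) := by
        rw [sum_congr rfl hterm, mul_sum]
    _ ≤ y * log (∑ i ∈ S, c i * v i) :=
        mul_le_mul_of_nonneg_left (sum_div_mul_log_mul_div_le_log_sum S
          (fun i hi => mul_nonneg (hc i hi) (hu i hi))
          (fun i hi => mul_nonneg (hc i hi) (hv i hi))
          (fun i hi hcu => mul_pos (pos_of_mul_pos_left hcu (hu i hi))
            (huv i hi (pos_of_mul_pos_right hcu (hc i hi)))) hA) hy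

theorem sum_mul_log_add_mul_log_div_eq_mul_log_sum {ι : Type*} (S : Finset ι) (y : ℝ)
    {c v : ι → ℝ} (hA : ∑ i ∈ S, c i * v i ≠ 0) :
    ∑ i ∈ S, (y * c i * v i / (∑ j ∈ S, c j * v j) * log (v i)
      + y * c i * v i / (∑ j ∈ S, c j * v j) * log ((∑ j ∈ S, c j * v j) / v i))
      = y * log (∑ i ∈ S, c i * v i) := by
  set A := ∑ j ∈ S, c j * v j
  calc _ = ∑ i ∈ S, y * log A / A * (c i * v i) := by
        refine sum_congr rfl fun i _ => ?_
        by_cases hvi : v i = 0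
        · simp [hvi]
        · rw [← mul_add, ← log_mul hvi (div_ne_zero hA hvi), mul_div_cancel₀ _ hvi]
          ring
    _ = y * log A := by rw [← mul_sum, div_mul_cancel₀ _ hA]

theorem pos_iff_mem_of_eq_zero_of_notMem {α : Type*} {T : Finset α} {f : α → ℝ}
    (hpos : ∀ t ∈ T, 0 < f t) (hpad : ∀ t, t ∉ T → f t = 0) {t : α} : 0 < f t ↔ t ∈ T :=
  ⟨fun h => by_contra fun ht => h.ne' (hpad t ht), hpos t⟩

theorem nonneg_of_pos_of_eq_zero_of_notMem {α : Type*} {T : Finset α} {f : α → ℝ}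
    (hpos : ∀ t ∈ T, 0 < f t) (hpad : ∀ t, t ∉ T → f t = 0) (t : α) : 0 ≤ f t := by
  by_cases ht : t ∈ T
  · exact (hpos t ht).le
  · exact (hpad t ht).ge

theorem weighted_method_auxiliary_function_general {κ : Type*} (Kset : Finset κ)
    (Tset Tauset : Finset ℤ)
    (ρ lam : ℝ) (hρ1 : ρ < 1)
    (y h st s0 : κ → ℤ → ℝ)
    (hy : ∀ k ∈ Kset, ∀ t ∈ Tset, 0 < y k t)
    (hh : ∀ k ∈ Kset, ∀ τ ∈ Tauset, 0 < h k τ)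
    (hs0pos : ∀ k ∈ Kset, ∀ t ∈ Tset, 0 < s0 k t)
    (hs0pad : ∀ k, ∀ t : ℤ, t ∉ Tset → s0 k t = 0)
    (hs0conv : ∀ k ∈ Kset, ∀ t ∈ Tset, 0 < ∑ τ ∈ Tauset, h k τ * s0 k (t - τ))
    (L₂ : (κ → ℤ → ℝ) → ℝ)
    (hL₂ : ∀ s : κ → ℤ → ℝ, L₂ s =
      ρ * ∑ k ∈ Kset, ∑ t ∈ Tset, (s k t * Real.log (s k t / st k t) - s k t)
      + (1 - ρ) * ∑ k ∈ Kset, ∑ t ∈ Tset,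
          (lam * s k t + ∑ τ ∈ Tauset, h k τ * s k (t - τ))
      - (1 - ρ) * ∑ k ∈ Kset, ∑ t ∈ Tset,
          y k t * Real.log (∑ τ ∈ Tauset, h k τ * s k (t - τ)))
    (G : (κ → ℤ → ℝ) → (κ → ℤ → ℝ) → ℝ)
    (hG : ∀ s s' : κ → ℤ → ℝ, G s s' =
      ρ * ∑ k ∈ Kset, ∑ t ∈ Tset, (s k t * Real.log (s k t / st k t) - s k t)
      + (1 - ρ) * ∑ k ∈ Kset, ∑ t ∈ Tset,
          (lam * s k t + ∑ τ ∈ Tauset, h k τ * s k (t - τ))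
      - (1 - ρ) * ∑ k ∈ Kset, ∑ t ∈ Tset, ∑ τ ∈ Tauset,
          (y k t * h k τ * s' k (t - τ) / (∑ τ' ∈ Tauset, h k τ' * s' k (t - τ'))) *
            Real.log (s k (t - τ))
      - (1 - ρ) * ∑ k ∈ Kset, ∑ t ∈ Tset, ∑ τ ∈ Tauset,
          (y k t * h k τ * s' k (t - τ) / (∑ τ' ∈ Tauset, h k τ' * s' k (t - τ'))) *
            Real.log ((∑ τ' ∈ Tauset, h k τ' * s' k (t - τ')) / s' k (t - τ))) :
    (∀ s : κ → ℤ → ℝ,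
        (∀ k ∈ Kset, ∀ t ∈ Tset, 0 < s k t) →
        (∀ k, ∀ t : ℤ, t ∉ Tset → s k t = 0) →
        G s s0 ≥ L₂ s) ∧
    (∀ s : κ → ℤ → ℝ,
        (∀ k ∈ Kset, ∀ t ∈ Tset, 0 < s k t) →
        (∀ k, ∀ t : ℤ, t ∉ Tset → s k t = 0) →
        (∀ k ∈ Kset, ∀ t ∈ Tset, 0 < ∑ τ ∈ Tauset, h k τ * s k (t - τ)) →
        G s s = L₂ s) := by
  have hρ : 0 ≤ 1 - ρ := by linarith
  refine ⟨fun s hs hspad => ?_, fun s _ _ hconv => ?_⟩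
  · rw [hG, hL₂, sub_sub, ← mul_add, ge_iff_le]
    gcongr
    simp only [← sum_add_distrib]
    gcongr with k hk t ht
    exact sum_mul_log_add_mul_log_div_le_mul_log_sum Tauset (hy k hk t ht).le
      (fun τ hτ => (hh k hk τ hτ).le)
      (fun τ _ => nonneg_of_pos_of_eq_zero_of_notMem (hs0pos k hk) (hs0pad k) _)
      (fun τ _ => nonneg_of_pos_of_eq_zero_of_notMem (hs k hk) (hspad k) _)
      (fun τ _ h0 => hs k hk _ ((pos_iff_mem_of_eq_zero_of_notMem (hs0pos k hk) (hs0pad k)).1 h0))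
      (hs0conv k hk t ht)
  · rw [hG, hL₂, sub_sub, ← mul_add]
    simp only [← sum_add_distrib]
    congr 2
    refine sum_congr rfl fun k hk => sum_congr rfl fun t ht => ?_
    exact sum_mul_log_add_mul_log_div_eq_mul_log_sum Tauset (y k t) (hconv k hk t ht).ne'

/-- `G` is an auxiliary function for the weighted-method cost `L₂` (paper, proof of
Theorem 1): `G s s⁰ ≥ L₂ s` for every strictly positive (zero-padded) `s`, and
`G s s = L₂ s`.  Time indices range over a finite set `Tset ⊆ ℤ`, filter taps over
`Tauset ⊆ ℤ`, and the zero-padding convention `s k t = 0` for `t ∉ Tset` makes the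
out-of-range convolution terms vanish. -/
theorem weighted_method_auxiliary_function {κ : Type*} (Kset : Finset κ)
    (Tset Tauset : Finset ℤ)
    (ρ lam : ℝ) (hρ0 : 0 < ρ) (hρ1 : ρ < 1) (hlam : 0 ≤ lam)
    (y h st s0 : κ → ℤ → ℝ)
    (hy : ∀ k ∈ Kset, ∀ t ∈ Tset, 0 < y k t)
    (hh : ∀ k ∈ Kset, ∀ τ ∈ Tauset, 0 < h k τ)
    (hst : ∀ k ∈ Kset, ∀ t ∈ Tset, 0 < st k t)
    (hs0pos : ∀ k ∈ Kset, ∀ t ∈ Tset, 0 < s0 k t)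
    (hs0pad : ∀ k, ∀ t : ℤ, t ∉ Tset → s0 k t = 0)
    (hs0conv : ∀ k ∈ Kset, ∀ t ∈ Tset, 0 < ∑ τ ∈ Tauset, h k τ * s0 k (t - τ))
    (L₂ : (κ → ℤ → ℝ) → ℝ)
    (hL₂ : ∀ s : κ → ℤ → ℝ, L₂ s =
      ρ * ∑ k ∈ Kset, ∑ t ∈ Tset, (s k t * Real.log (s k t / st k t) - s k t)
      + (1 - ρ) * ∑ k ∈ Kset, ∑ t ∈ Tset,
          (lam * s k t + ∑ τ ∈ Tauset, h k τ * s k (t - τ))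
      - (1 - ρ) * ∑ k ∈ Kset, ∑ t ∈ Tset,
          y k t * Real.log (∑ τ ∈ Tauset, h k τ * s k (t - τ)))
    (G : (κ → ℤ → ℝ) → (κ → ℤ → ℝ) → ℝ)
    (hG : ∀ s s' : κ → ℤ → ℝ, G s s' =
      ρ * ∑ k ∈ Kset, ∑ t ∈ Tset, (s k t * Real.log (s k t / st k t) - s k t)
      + (1 - ρ) * ∑ k ∈ Kset, ∑ t ∈ Tset,
          (lam * s k t + ∑ τ ∈ Tauset, h k τ * s k (t - τ))
      - (1 - ρ) * ∑ k ∈ Kset, ∑ t ∈ Tset, ∑ τ ∈ Tauset,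
          (y k t * h k τ * s' k (t - τ) / (∑ τ' ∈ Tauset, h k τ' * s' k (t - τ'))) *
            Real.log (s k (t - τ))
      - (1 - ρ) * ∑ k ∈ Kset, ∑ t ∈ Tset, ∑ τ ∈ Tauset,
          (y k t * h k τ * s' k (t - τ) / (∑ τ' ∈ Tauset, h k τ' * s' k (t - τ'))) *
            Real.log ((∑ τ' ∈ Tauset, h k τ' * s' k (t - τ')) / s' k (t - τ))) :
    (∀ s : κ → ℤ → ℝ,
        (∀ k ∈ Kset, ∀ t ∈ Tset, 0 < s k t) →
        (∀ k, ∀ t : ℤ, t ∉ Tset → s k t = 0) →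
        G s s0 ≥ L₂ s) ∧
    (∀ s : κ → ℤ → ℝ,
        (∀ k ∈ Kset, ∀ t ∈ Tset, 0 < s k t) →
        (∀ k, ∀ t : ℤ, t ∉ Tset → s k t = 0) →
        (∀ k ∈ Kset, ∀ t ∈ Tset, 0 < ∑ τ ∈ Tauset, h k τ * s k (t - τ)) →
        G s s = L₂ s) :=
  weighted_method_auxiliary_function_general Kset Tset Tauset ρ lam hρ1 y h st s0 hy hh hs0pos
    hs0pad hs0conv L₂ hL₂ G hG
end

section
/- Fix λ ≥ 0, finite index sets for k, t, τ, strictly positive data y(k,t), strictly positive s(k,t) (zero-padding convention for out-of-range time indices), and strictly positive current h(k,τ), with ỹ(k,t) = ∑_τ h(k,τ)·s(k,t−τ) strictly positive for all (k,t). Define Q(h) = ∑_{k,t} KL( y(k,t) | ∑_τ h(k,τ)·s(k,t−τ) ) + λ·∑_{k,t} s(k,t), and define the multiplicative update h'(k,τ) = h(k,τ) · ( ∑_t y(k,t)·s(k,t−τ)/ỹ(k,t) ) / ( ∑_t s(k,t−τ) ), assuming each denominator ∑_t s(k,t−τ) is strictly positive. Then Q(h') ≤ Q(h). (Monotonic non-increase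 of the regularized N-CTF cost (9) under the h-update rule (10).) -/
/-!
The `h`-update minimises the usual Lee–Seung auxiliary function. For each `(k, t)`, concavity of
`log` (Jensen, with weights `h τ s(t - τ) / ỹ t`) bounds the change of `KL(y | ỹ)` by a sum over
`τ`. Exchanging the sums over `t` and `τ`, and writing `h' = h A / B` with
`A τ = ∑_t y t s(t - τ) / ỹ t` and `B τ = ∑_t s(t - τ)`, the bound becomes
`∑_τ h τ ((A τ - B τ) - A τ log (A τ / B τ))`, and each summand is nonpositive because
`a - b ≤ a log (a / b)`. The penalty `λ ∑ s` does not depend on `h`.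
-/

open Finset Real

noncomputable def genKLDiv (y ŷ : ℝ) : ℝ := y * log (y / ŷ) + ŷ - y

lemma sub_le_mul_log_div {a b : ℝ} (ha : 0 < a) (hb : 0 < b) : a - b ≤ a * log (a / b) := by
  have h := one_sub_inv_le_log_of_pos (div_pos ha hb)
  rw [inv_div] at h
  calc a - b = a * (1 - b / a) := by field_simp
    _ ≤ a * log (a / b) := mul_le_mul_of_nonneg_left h ha.le

lemma Finset.sum_pos_of_pos_imp_pos {ι : Type*} {I : Finset ι} {f g : ι → ℝ}
    (hg : ∀ i ∈ I, 0 ≤ g i) (hfg : ∀ i ∈ I, 0 < f i → 0 < g i) (hf : 0 < ∑ i ∈ I, f i) :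
    0 < ∑ i ∈ I, g i := by
  obtain ⟨i, hi, hfi⟩ := exists_lt_of_sum_lt (s := I) (f := 0) (g := f) (by simpa using hf)
  exact sum_pos' hg ⟨i, hi, hfg i hi hfi⟩

lemma sum_mul_log_div_le_log_div_sum {ι : Type*} {I : Finset ι} {h h' w : ι → ℝ}
    (hh : ∀ i ∈ I, 0 < h i) (hh' : ∀ i ∈ I, 0 < h' i) (hw : ∀ i ∈ I, 0 ≤ w i)
    (hY : 0 < ∑ i ∈ I, h i * w i) :
    ∑ i ∈ I, h i * w i / (∑ j ∈ I, h j * w j) * log (h' i / h i)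
      ≤ log ((∑ i ∈ I, h' i * w i) / ∑ i ∈ I, h i * w i) := by
  set Y := ∑ i ∈ I, h i * w i
  have hpoints : ∑ i ∈ I, h i * w i / Y * (h' i / h i) = (∑ i ∈ I, h' i * w i) / Y := by
    rw [sum_div]
    refine sum_congr rfl fun i hi => ?_
    field_simp [(hh i hi).ne']
  rw [← hpoints]
  exact strictConcaveOn_log_Ioi.concaveOn.le_map_sum
    (fun i hi => div_nonneg (mul_nonneg (hh i hi).le (hw i hi)) hY.le)
    (by rw [← sum_div, div_self hY.ne'])
    (fun i hi => Set.mem_Ioi.mpr (div_pos (hh' i hi) (hh i hi)))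

/-- The auxiliary-function bound: it majorises the change of the cost by a sum separable in `i`. -/
lemma genKLDiv_sum_mul_sub_le {ι : Type*} {I : Finset ι} {y : ℝ} {h h' w : ι → ℝ} (hy : 0 < y)
    (hh : ∀ i ∈ I, 0 < h i) (hh' : ∀ i ∈ I, 0 < h' i) (hw : ∀ i ∈ I, 0 ≤ w i)
    (hY : 0 < ∑ i ∈ I, h i * w i) :
    genKLDiv y (∑ i ∈ I, h' i * w i) - genKLDiv y (∑ i ∈ I, h i * w i)
      ≤ ∑ i ∈ I, (-(y * (h i * w i) / ∑ j ∈ I, h j * w j) * log (h' i / h i)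
          + (h' i - h i) * w i) := by
  set Y := ∑ i ∈ I, h i * w i
  set Y' := ∑ i ∈ I, h' i * w i
  have hY' : 0 < Y' := sum_pos_of_pos_imp_pos (fun i hi => mul_nonneg (hh' i hi).le (hw i hi))
    (fun i hi hhw => mul_pos (hh' i hi) (pos_of_mul_pos_right hhw (hh i hi).le)) hY
  have hjensen := mul_le_mul_of_nonneg_left
    (sum_mul_log_div_le_log_div_sum hh hh' hw hY) hy.le
  have hlog : genKLDiv y Y' - genKLDiv y Y = -(y * log (Y' / Y)) + (Y' - Y) := by
    simp only [genKLDiv]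
    rw [log_div hy.ne' hY'.ne', log_div hy.ne' hY.ne', log_div hY'.ne' hY.ne']
    ring
  have hlin : ∑ i ∈ I, (-(y * (h i * w i) / Y) * log (h' i / h i) + (h' i - h i) * w i)
      = -(y * ∑ i ∈ I, h i * w i / Y * log (h' i / h i)) + (Y' - Y) := by
    rw [sum_add_distrib, mul_sum, ← sum_neg_distrib, ← sum_sub_distrib]
    congr 1 <;> refine sum_congr rfl fun i _ => by ring
  rw [hlog, hlin]
  linarith

lemma mul_div_sub_mul_le_mul_log_div {h a b : ℝ} (hh : 0 < h) (ha : 0 < a) (hb : 0 < b) :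
    (h * (a / b) - h) * b ≤ h * a * log (a / b) := by
  have hexp : (h * (a / b) - h) * b = h * (a - b) := by field_simp
  rw [hexp, mul_assoc]
  exact mul_le_mul_of_nonneg_left (sub_le_mul_log_div ha hb) hh.le

section MultiplicativeUpdate

variable {ι σ : Type*} (T : Finset ι) (U : Finset σ) (y : ι → ℝ) (W : ι → σ → ℝ) (h h' : σ → ℝ)

theorem sum_genKLDiv_le_of_multiplicative_update (hy : ∀ t ∈ T, 0 < y t)
    (hW : ∀ t ∈ T, ∀ τ ∈ U, 0 ≤ W t τ) (hh : ∀ τ ∈ U, 0 < h τ)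
    (hconv : ∀ t ∈ T, 0 < ∑ τ ∈ U, h τ * W t τ) (hden : ∀ τ ∈ U, 0 < ∑ t ∈ T, W t τ)
    (hh' : ∀ τ ∈ U, h' τ =
      h τ * (∑ t ∈ T, y t * W t τ / ∑ τ' ∈ U, h τ' * W t τ') / ∑ t ∈ T, W t τ) :
    ∑ t ∈ T, genKLDiv (y t) (∑ τ ∈ U, h' τ * W t τ)
      ≤ ∑ t ∈ T, genKLDiv (y t) (∑ τ ∈ U, h τ * W t τ) := by
  have hA : ∀ τ ∈ U, 0 < ∑ t ∈ T, y t * W t τ / ∑ τ' ∈ U, h τ' * W t τ' := fun τ hτ =>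
    sum_pos_of_pos_imp_pos
      (fun t ht => div_nonneg (mul_nonneg (hy t ht).le (hW t ht τ hτ)) (hconv t ht).le)
      (fun t ht hWt => div_pos (mul_pos (hy t ht) hWt) (hconv t ht)) (hden τ hτ)
  have hh'pos : ∀ τ ∈ U, 0 < h' τ := fun τ hτ => by
    rw [hh' τ hτ]
    exact div_pos (mul_pos (hh τ hτ) (hA τ hτ)) (hden τ hτ)
  rw [← sub_nonpos, ← sum_sub_distrib]
  refine (sum_le_sum fun t ht => genKLDiv_sum_mul_sub_le (hy t ht) hh hh'pos (hW t ht)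
    (hconv t ht)).trans ?_
  rw [sum_comm]
  refine sum_nonpos fun τ hτ => ?_
  have hregroup : ∑ t ∈ T, (-(y t * (h τ * W t τ) / ∑ τ' ∈ U, h τ' * W t τ')
        * log (h' τ / h τ) + (h' τ - h τ) * W t τ)
      = (h' τ - h τ) * (∑ t ∈ T, W t τ)
        - h τ * (∑ t ∈ T, y t * W t τ / ∑ τ' ∈ U, h τ' * W t τ') * log (h' τ / h τ) := by
    rw [mul_sum, mul_sum, sum_mul, ← sum_sub_distrib]
    exact sum_congr rfl fun t _ => by ring
  rw [hregroup, hh' τ hτ, mul_div_assoc, mul_div_cancel_left₀ _ (hh τ hτ).ne', sub_nonpos]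
  exact mul_div_sub_mul_le_mul_log_div (hh τ hτ) (hA τ hτ) (hden τ hτ)

end MultiplicativeUpdate

theorem nctf_h_update_nonincreasing_general {κ : Type*} (Kset : Finset κ)
    (Tset Tauset : Finset ℤ)
    (lam : ℝ)
    (y s h : κ → ℤ → ℝ)
    (hy : ∀ k ∈ Kset, ∀ t ∈ Tset, 0 < y k t)
    (hs : ∀ k ∈ Kset, ∀ t ∈ Tset, 0 < s k t)
    (hspad : ∀ k, ∀ t : ℤ, t ∉ Tset → s k t = 0)
    (hh : ∀ k ∈ Kset, ∀ τ ∈ Tauset, 0 < h k τ)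
    (hconv : ∀ k ∈ Kset, ∀ t ∈ Tset, 0 < ∑ τ ∈ Tauset, h k τ * s k (t - τ))
    (hden : ∀ k ∈ Kset, ∀ τ ∈ Tauset, 0 < ∑ t ∈ Tset, s k (t - τ))
    (Q : (κ → ℤ → ℝ) → ℝ)
    (hQ : ∀ g : κ → ℤ → ℝ, Q g =
      (∑ k ∈ Kset, ∑ t ∈ Tset,
        (y k t * Real.log (y k t / (∑ τ ∈ Tauset, g k τ * s k (t - τ)))
          + (∑ τ ∈ Tauset, g k τ * s k (t - τ)) - y k t))
      + lam * ∑ k ∈ Kset, ∑ t ∈ Tset, s k t)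
    (h' : κ → ℤ → ℝ)
    (hh' : ∀ k ∈ Kset, ∀ τ ∈ Tauset, h' k τ =
      h k τ * (∑ t ∈ Tset, y k t * s k (t - τ) /
          (∑ τ' ∈ Tauset, h k τ' * s k (t - τ')))
        / (∑ t ∈ Tset, s k (t - τ))) :
    Q h' ≤ Q h := by
  rw [hQ h', hQ h]
  refine add_le_add_left (sum_le_sum fun k hk => ?_) _
  have hs_nonneg : ∀ u, 0 ≤ s k u := fun u => by
    by_cases hu : u ∈ Tset
    · exact (hs k hk u hu).le
    · exact (hspad k u hu).ge
  exact sum_genKLDiv_le_of_multiplicative_update Tset Tauset (y k) (fun t τ => s k (t - τ))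
    (h k) (h' k) (hy k hk) (fun _ _ _ _ => hs_nonneg _) (hh k hk) (hconv k hk) (hden k hk)
    (hh' k hk)

/-- Monotonic non-increase of the regularized N-CTF cost (9) under the
multiplicative `h`-update rule (10):
`h'(k,τ) = h(k,τ) (∑_t y(k,t) s(k,t−τ)/ỹ(k,t)) / (∑_t s(k,t−τ))` satisfies
`Q(h') ≤ Q(h)`, where `ỹ(k,t) = ∑_τ h(k,τ) s(k,t−τ)` and
`Q(h) = ∑_{k,t} KL(y(k,t) | ∑_τ h(k,τ) s(k,t−τ)) + λ ∑_{k,t} s(k,t)`. -/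
theorem nctf_h_update_nonincreasing {κ : Type*} (Kset : Finset κ)
    (Tset Tauset : Finset ℤ)
    (lam : ℝ) (hlam : 0 ≤ lam)
    (y s h : κ → ℤ → ℝ)
    (hy : ∀ k ∈ Kset, ∀ t ∈ Tset, 0 < y k t)
    (hs : ∀ k ∈ Kset, ∀ t ∈ Tset, 0 < s k t)
    (hspad : ∀ k, ∀ t : ℤ, t ∉ Tset → s k t = 0)
    (hh : ∀ k ∈ Kset, ∀ τ ∈ Tauset, 0 < h k τ)
    (hconv : ∀ k ∈ Kset, ∀ t ∈ Tset, 0 < ∑ τ ∈ Tauset, h k τ * s k (t - τ))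
    (hden : ∀ k ∈ Kset, ∀ τ ∈ Tauset, 0 < ∑ t ∈ Tset, s k (t - τ))
    (Q : (κ → ℤ → ℝ) → ℝ)
    (hQ : ∀ g : κ → ℤ → ℝ, Q g =
      (∑ k ∈ Kset, ∑ t ∈ Tset,
        (y k t * Real.log (y k t / (∑ τ ∈ Tauset, g k τ * s k (t - τ)))
          + (∑ τ ∈ Tauset, g k τ * s k (t - τ)) - y k t))
      + lam * ∑ k ∈ Kset, ∑ t ∈ Tset, s k t)
    (h' : κ → ℤ → ℝ)
    (hh' : ∀ k ∈ Kset, ∀ τ ∈ Tauset, h' k τ =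
      h k τ * (∑ t ∈ Tset, y k t * s k (t - τ) /
          (∑ τ' ∈ Tauset, h k τ' * s k (t - τ')))
        / (∑ t ∈ Tset, s k (t - τ))) :
    Q h' ≤ Q h :=
  nctf_h_update_nonincreasing_general Kset Tset Tauset lam y s h hy hs hspad hh hconv hden Q hQ h'
    hh'
end
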